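/- For every p > 0, the 9×9 block matrix X(p) = [x_{ij}] ∈ M₃(M₃) given in the paper, namely X(p) = ∑_{i,j} e_{ij} ⊗ e_{ij} adjusted with diagonal entries p, p⁻¹, so that its diagonal blocks are diag(1,p,p⁻¹), diag(p⁻¹,1,p), diag(p,p⁻¹,1), is positive semidefinite, and its partial transpose [x_{ji}] is also positive semidefinite. -/
import Mathlib


open ComplexOrder Matrix

/-- The 9×9 matrix `X(p)` of the paper: `X_{(i,i),(j,j)} = 1`; the diagonal entries at the
off-diagonal index pairs `(i, i+1)` are `p` and at `(i, i+2)` are `p⁻¹`; all other entries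
vanish. -/
noncomputable def Xmat (p : ℝ) : Matrix (Fin 3 × Fin 3) (Fin 3 × Fin 3) ℂ :=
  Matrix.of fun a b =>
    if a.1 = a.2 ∧ b.1 = b.2 then 1
    else if a = b then (if a.2 = a.1 + 1 then (p : ℂ) else ((p : ℝ)⁻¹ : ℝ)) else 0

noncomputable def Bx (p : ℝ) : Matrix (Fin 3 × Fin 3) (Fin 3 × Fin 3) ℂ :=
  Matrix.of fun c a =>
    if c = ((0 : Fin 3), (0 : Fin 3)) then (if a.1 = a.2 then 1 else 0)
    else if c.1 = c.2 then 0
    else if a = c then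
      (if c.2 = c.1 + 1 then ((Real.sqrt p : ℝ) : ℂ) else ((Real.sqrt p⁻¹ : ℝ) : ℂ))
    else 0

noncomputable def By (p : ℝ) : Matrix (Fin 3 × Fin 3) (Fin 3 × Fin 3) ℂ :=
  Matrix.of fun c a =>
    if c.1 = c.2 then (if a = c then 1 else 0)
    else if c.2 = c.1 + 1 then
      (if a = c then ((Real.sqrt p : ℝ) : ℂ)
       else if a = (c.2, c.1) then ((Real.sqrt p⁻¹ : ℝ) : ℂ) else 0)
    else 0

set_option maxHeartbeats 4000000 in
/-- For every `p > 0`, both `X(p)` and its partial transpose `[x_{ji}]` are positive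
semidefinite. -/
theorem stmt_14 (p : ℝ) (hp : 0 < p) :
    (Xmat p).PosSemidef ∧
    (Matrix.of fun a b : Fin 3 × Fin 3 => Xmat p (b.1, a.2) (a.1, b.2)).PosSemidef := by
  have hA : ((Real.sqrt p : ℝ) : ℂ) * ((Real.sqrt p : ℝ) : ℂ) = (p : ℂ) := by
    rw [← Complex.ofReal_mul, Real.mul_self_sqrt hp.le]
  have hs : ((Real.sqrt p : ℝ) : ℂ) ≠ 0 := by
    simpa using (Real.sqrt_pos.2 hp).ne'
  have hB : ((Real.sqrt p : ℝ) : ℂ)⁻¹ * ((Real.sqrt p : ℝ) : ℂ)⁻¹ = ((p : ℂ))⁻¹ := by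
    rw [← mul_inv, hA]
  have hC : ((Real.sqrt p : ℝ) : ℂ) * ((Real.sqrt p : ℝ) : ℂ)⁻¹ = 1 := mul_inv_cancel₀ hs
  have hD : ((Real.sqrt p : ℝ) : ℂ)⁻¹ * ((Real.sqrt p : ℝ) : ℂ) = 1 := inv_mul_cancel₀ hs
  constructor
  · have h : Xmat p = (Bx p)ᴴ * Bx p := by
      ext a b
      fin_cases a <;> fin_cases b <;>
        simp [Xmat, Bx, Matrix.mul_apply, Fintype.sum_prod_type, Fin.sum_univ_three,
          Matrix.conjTranspose_apply, Prod.ext_iff, Complex.conj_ofReal, map_inv₀, hA, hB, hC, hD]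
    rw [h]
    exact Matrix.posSemidef_conjTranspose_mul_self _
  · have h : (Matrix.of fun a b : Fin 3 × Fin 3 => Xmat p (b.1, a.2) (a.1, b.2))
        = (By p)ᴴ * By p := by
      ext a b
      fin_cases a <;> fin_cases b <;>
        simp [Xmat, By, Matrix.mul_apply, Fintype.sum_prod_type, Fin.sum_univ_three,
          Matrix.conjTranspose_apply, Prod.ext_iff, Complex.conj_ofReal, map_inv₀, hA, hB, hC, hD]
    rw [h]
    exact Matrix.posSemidef_conjTranspose_mul_self _
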